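/- arXiv:1410.6895 — 3 statements merged into one kernel-verified Lean document; each statement's English description precedes it below -/
import Mathlib

section
/- Let A ∈ ℝ^{P×Q}, B = [[0, A],[Aᵀ, 0]], and K ≤ Q ≤ P. The maximum of trace(Wᵀ B W) over all W ∈ ℝ^{(P+Q)×K} with WᵀW = I_K is equal to the maximum of trace(Uᵀ A V) over U ∈ ℝ^{P×K}, V ∈ ℝ^{Q×K} with UᵀU = VᵀV = I_K. -/
/-!
Write `W = (X; Y)` in blocks. Then `WᵀW = XᵀX + YᵀY = 1` and `tr(WᵀBW) = 2 tr(XᵀAY)`.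
Rotating `W` on the right by an orthogonal matrix changes neither quantity, so we may assume
`XᵀX` (hence also `YᵀY = 1 - XᵀX`) diagonal. Then `X = U diag(c)` and `Y = V diag(s)` with
`U, V` having orthonormal columns and `cᵢ² + sᵢ² = 1` (where a column of `X` or `Y` vanishes,
the corresponding column of `U` or `V` is free and can be chosen orthonormal since `K ≤ Q ≤ P`).
Now
`2 tr(XᵀAY) = Σ 2cᵢsᵢ (UᵀAV)ᵢᵢ ≤ Σ |(UᵀAV)ᵢᵢ|`, and flipping signs of columns of `V` turns the
right-hand side into a value of `tr(UᵀAV)`. Conversely `W = (U; V)/√2` realises every value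
`tr(UᵀAV)` as a value of `tr(WᵀBW)`.
-/

open Matrix Module

lemma Orthonormal.exists_orthonormal_extension_of_card_le {E ι : Type*} [NormedAddCommGroup E]
    [InnerProductSpace ℝ E] [FiniteDimensional ℝ E] [Fintype ι]
    (hcard : Fintype.card ι ≤ finrank ℝ E) {x : ι → E} {s : Set ι}
    (hx : Orthonormal ℝ (s.domRestrict x)) :
    ∃ u : ι → E, Orthonormal ℝ u ∧ ∀ i ∈ s, u i = x i := by
  classical
  let s' : Set (ι ⊕ Fin (finrank ℝ E - Fintype.card ι)) := Sum.inl '' s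
  have hx' : Orthonormal ℝ (s'.domRestrict (Sum.elim x 0)) := by
    rw [orthonormal_iff_ite] at hx ⊢
    rintro ⟨_, i, hi, rfl⟩ ⟨_, j, hj, rfl⟩
    simpa [Set.domRestrict, Subtype.ext_iff] using hx ⟨i, hi⟩ ⟨j, hj⟩
  obtain ⟨b, hb⟩ := hx'.exists_orthonormalBasis_extension_of_card_eq (by simp; omega)
  exact ⟨b ∘ Sum.inl, b.orthonormal.comp _ Sum.inl_injective,
    fun i hi => hb _ (Set.mem_image_of_mem _ hi)⟩

lemma exists_orthonormal_norm_smul_eq {E ι : Type*} [NormedAddCommGroup E]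
    [InnerProductSpace ℝ E] [FiniteDimensional ℝ E] [Fintype ι]
    (hcard : Fintype.card ι ≤ finrank ℝ E) {x : ι → E}
    (hx : Pairwise fun i j => inner ℝ (x i) (x j) = 0) :
    ∃ u : ι → E, Orthonormal ℝ u ∧ ∀ i, x i = ‖x i‖ • u i := by
  have hnormed : Orthonormal ℝ ({i | x i ≠ 0}.domRestrict fun i => ‖x i‖⁻¹ • x i) := by
    refine ⟨fun ⟨i, hi⟩ => norm_smul_inv_norm hi, fun ⟨i, _⟩ ⟨j, _⟩ hij => ?_⟩
    simp [inner_smul_left, inner_smul_right, hx (Subtype.coe_ne_coe.mpr hij)]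
  obtain ⟨u, hu, hux⟩ := hnormed.exists_orthonormal_extension_of_card_le hcard
  refine ⟨u, hu, fun i => ?_⟩
  by_cases hi : x i = 0
  · simp [hi]
  · rw [hux i hi, smul_inv_smul₀ (norm_ne_zero_iff.mpr hi)]

lemma Matrix.gram_toLp_col {m k : Type*} [Fintype m] (X : Matrix m k ℝ) :
    gram ℝ (fun i => WithLp.toLp 2 (X.col i)) = Xᵀ * X := by
  ext i j
  simp [gram_apply, EuclideanSpace.inner_toLp_toLp, mul_apply, dotProduct, mul_comm]

lemma exists_isometry_mul_diagonal {m k : Type*} [Fintype m] [Fintype k] [DecidableEq k]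
    (hcard : Fintype.card k ≤ Fintype.card m) {X : Matrix m k ℝ} (hX : (Xᵀ * X).IsDiag) :
    ∃ (U : Matrix m k ℝ) (c : k → ℝ), Uᵀ * U = 1 ∧ X = U * diagonal c := by
  obtain ⟨u, hu, hXu⟩ := exists_orthonormal_norm_smul_eq (x := fun i => WithLp.toLp 2 (X.col i))
    (by simpa using hcard) fun i j hij => by simpa [← gram_toLp_col] using hX hij
  refine ⟨of fun p i => u i p, fun i => ‖WithLp.toLp 2 (X.col i)‖, ?_, ?_⟩
  · rw [← gram_toLp_col]
    exact gram_eq_one_iff_orthonormal.mpr hu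
  · ext p i
    simpa [mul_comm] using congr_arg (· p) (hXu i)

lemma Matrix.IsSymm.exists_orthogonal_isDiag {k : Type*} [Fintype k] [DecidableEq k]
    {S : Matrix k k ℝ} (hS : S.IsSymm) :
    ∃ O : Matrix k k ℝ, Oᵀ * O = 1 ∧ O * Oᵀ = 1 ∧ (Oᵀ * S * O).IsDiag := by
  have hS' : S.IsHermitian := by rwa [IsHermitian, conjTranspose_eq_transpose_of_trivial]
  set O : Matrix k k ℝ := ↑hS'.eigenvectorUnitary
  have hstar : star O = Oᵀ := conjTranspose_eq_transpose_of_trivial _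
  refine ⟨O, ?_, ?_, ?_⟩
  · rw [← hstar]; exact Unitary.coe_star_mul_self _
  · rw [← hstar]; exact Unitary.coe_mul_star_self _
  · have hdiag := hS'.conjStarAlgAut_star_eigenvectorUnitary
    simp only [Unitary.conjStarAlgAut_apply, Unitary.coe_star, star_star] at hdiag
    rw [← hstar, hdiag]
    exact isDiag_diagonal _

lemma exists_isometry_trace_mul_eq_sum_abs_diag {n k : Type*} [Fintype n] [Fintype k]
    [DecidableEq k] (M : Matrix k n ℝ) {V : Matrix n k ℝ} (hV : Vᵀ * V = 1) :
    ∃ V' : Matrix n k ℝ, V'ᵀ * V' = 1 ∧ trace (M * V') = ∑ i, |(M * V) i i| := by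
  let ε : k → ℝ := fun i => if 0 ≤ (M * V) i i then 1 else -1
  refine ⟨V * diagonal ε, ?_, ?_⟩
  · have hε : ∀ i, ε i * ε i = 1 := fun i => by unfold ε; split_ifs <;> norm_num
    rw [transpose_mul, diagonal_transpose, Matrix.mul_assoc, ← Matrix.mul_assoc Vᵀ, hV,
      Matrix.one_mul, diagonal_mul_diagonal, ← diagonal_one]
    exact congrArg diagonal (funext hε)
  · rw [← Matrix.mul_assoc]
    refine Finset.sum_congr rfl fun i _ => ?_
    simp only [diag_apply, mul_diagonal, ε]
    split_ifs with h
    · rw [abs_of_nonneg h, mul_one]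
    · rw [abs_of_neg (not_le.mp h), mul_neg_one]

lemma two_mul_trace_diagonal_mul_mul_diagonal_le {k : Type*} [Fintype k] [DecidableEq k]
    (M : Matrix k k ℝ) {c s : k → ℝ} (hcs : ∀ i, c i ^ 2 + s i ^ 2 = 1) :
    2 * trace (diagonal c * M * diagonal s) ≤ ∑ i, |M i i| := by
  simp only [trace, diag, mul_diagonal, diagonal_mul, Finset.mul_sum]
  refine Finset.sum_le_sum fun i _ => ?_
  calc 2 * (c i * M i i * s i) = (2 * c i * s i) * M i i := by ring
    _ ≤ |2 * c i * s i| * |M i i| := by rw [← abs_mul]; exact le_abs_self _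
    _ ≤ 1 * |M i i| := by
      gcongr
      rw [← hcs i]
      exact abs_le.mpr ⟨by nlinarith [sq_nonneg (c i + s i)], two_mul_le_add_sq _ _⟩
    _ = |M i i| := one_mul _

section Isometries

variable {m n k : Type*} [Fintype m] [Fintype n] [Fintype k] [DecidableEq k] (A : Matrix m n ℝ)

lemma exists_isometries_two_mul_trace_le_of_isDiag (hm : Fintype.card k ≤ Fintype.card m)
    (hn : Fintype.card k ≤ Fintype.card n) {X : Matrix m k ℝ} {Y : Matrix n k ℝ}
    (hXY : Xᵀ * X + Yᵀ * Y = 1) (hX : (Xᵀ * X).IsDiag) :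
    ∃ (U : Matrix m k ℝ) (V : Matrix n k ℝ), Uᵀ * U = 1 ∧ Vᵀ * V = 1 ∧
      2 * trace (Xᵀ * A * Y) ≤ trace (Uᵀ * A * V) := by
  have hY : (Yᵀ * Y).IsDiag := by rw [eq_sub_of_add_eq' hXY]; exact isDiag_one.sub hX
  obtain ⟨U, c, hU, rfl⟩ := exists_isometry_mul_diagonal hm hX
  obtain ⟨V, s, hV, rfl⟩ := exists_isometry_mul_diagonal hn hY
  have hcs : ∀ i, c i ^ 2 + s i ^ 2 = 1 := fun i => by
    simpa [transpose_mul, Matrix.mul_assoc, ← Matrix.mul_assoc Uᵀ, ← Matrix.mul_assoc Vᵀ, hU, hV,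
      sq] using congr_fun₂ hXY i i
  obtain ⟨V', hV', htr⟩ := exists_isometry_trace_mul_eq_sum_abs_diag (Uᵀ * A) hV
  refine ⟨U, V', hU, hV', ?_⟩
  have hconj : (U * diagonal c)ᵀ * A * (V * diagonal s) =
      diagonal c * (Uᵀ * A * V) * diagonal s := by
    simp [transpose_mul, Matrix.mul_assoc]
  rw [htr, hconj]
  exact two_mul_trace_diagonal_mul_mul_diagonal_le _ hcs

lemma exists_isometries_two_mul_trace_le (hm : Fintype.card k ≤ Fintype.card m)
    (hn : Fintype.card k ≤ Fintype.card n) {X : Matrix m k ℝ} {Y : Matrix n k ℝ}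
    (hXY : Xᵀ * X + Yᵀ * Y = 1) :
    ∃ (U : Matrix m k ℝ) (V : Matrix n k ℝ), Uᵀ * U = 1 ∧ Vᵀ * V = 1 ∧
      2 * trace (Xᵀ * A * Y) ≤ trace (Uᵀ * A * V) := by
  have hsymm : (Xᵀ * X).IsSymm := by rw [IsSymm, transpose_mul, transpose_transpose]
  obtain ⟨O, hO, hO', hdiag⟩ := hsymm.exists_orthogonal_isDiag
  have hXY' : (X * O)ᵀ * (X * O) + (Y * O)ᵀ * (Y * O) = 1 := by
    simp only [transpose_mul, Matrix.mul_assoc, ← Matrix.mul_add]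
    rw [← Matrix.mul_assoc Xᵀ, ← Matrix.mul_assoc Yᵀ, ← Matrix.add_mul, hXY, Matrix.one_mul, hO]
  have htr : trace ((X * O)ᵀ * A * (Y * O)) = trace (Xᵀ * A * Y) := by
    rw [transpose_mul, show Oᵀ * Xᵀ * A * (Y * O) = Oᵀ * (Xᵀ * A * Y * O) by
      simp only [Matrix.mul_assoc], trace_mul_comm, Matrix.mul_assoc, hO', Matrix.mul_one]
  rw [← htr]
  exact exists_isometries_two_mul_trace_le_of_isDiag A hm hn hXY'
    (by simpa [transpose_mul, Matrix.mul_assoc] using hdiag)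

end Isometries

section Blocks

variable {R m n k : Type*} [CommRing R] [Fintype m] [Fintype n]

lemma transpose_fromRows_mul_fromRows (X : Matrix m k R) (Y : Matrix n k R) :
    (fromRows X Y)ᵀ * fromRows X Y = Xᵀ * X + Yᵀ * Y := by
  rw [transpose_fromRows, fromCols_mul_fromRows]

lemma trace_transpose_fromRows_mul_fromBlocks_mul [Fintype k] (A : Matrix m n R)
    (X : Matrix m k R) (Y : Matrix n k R) :
    trace ((fromRows X Y)ᵀ * fromBlocks 0 A Aᵀ 0 * fromRows X Y) = 2 * trace (Xᵀ * A * Y) := by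
  have hswap : Yᵀ * Aᵀ * X = (Xᵀ * A * Y)ᵀ := by simp [transpose_mul, Matrix.mul_assoc]
  rw [transpose_fromRows, fromCols_mul_fromBlocks, fromCols_mul_fromRows]
  simp only [Matrix.mul_zero, zero_add, add_zero, trace_add, hswap, trace_transpose]
  ring

end Blocks

lemma exists_isometry_trace_fromBlocks_eq {m n k : Type*} [Fintype m] [Fintype n] [Fintype k]
    [DecidableEq k] (A : Matrix m n ℝ) {U : Matrix m k ℝ} {V : Matrix n k ℝ}
    (hU : Uᵀ * U = 1) (hV : Vᵀ * V = 1) :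
    ∃ W : Matrix (m ⊕ n) k ℝ, Wᵀ * W = 1 ∧
      trace (Wᵀ * fromBlocks 0 A Aᵀ 0 * W) = trace (Uᵀ * A * V) := by
  have hsqrt : (√2)⁻¹ * (√2)⁻¹ = (2 : ℝ)⁻¹ := by
    rw [← mul_inv, Real.mul_self_sqrt zero_le_two]
  refine ⟨(√2)⁻¹ • fromRows U V, ?_, ?_⟩
  · rw [transpose_smul, Matrix.smul_mul, Matrix.mul_smul, smul_smul, hsqrt,
      transpose_fromRows_mul_fromRows, hU, hV, ← two_smul ℝ, smul_smul]
    norm_num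
  · rw [transpose_smul, Matrix.smul_mul, Matrix.smul_mul, Matrix.mul_smul, smul_smul, hsqrt,
      trace_smul, trace_transpose_fromRows_mul_fromBlocks_mul, smul_eq_mul]
    ring

/-- The maximum of trace(Wᵀ B W) over W with K orthonormal columns, for
B = [[0,A],[Aᵀ,0]], equals the maximum of trace(Uᵀ A V) over U, V with K
orthonormal columns. -/
theorem stmt_3 (P Q K : ℕ) (hQP : Q ≤ P) (hK : K ≤ Q)
    (A : Matrix (Fin P) (Fin Q) ℝ) :
    sSup {t : ℝ | ∃ W : Matrix (Fin P ⊕ Fin Q) (Fin K) ℝ,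
        Wᵀ * W = 1 ∧ t = trace (Wᵀ * fromBlocks 0 A Aᵀ 0 * W)}
      = sSup {t : ℝ | ∃ (U : Matrix (Fin P) (Fin K) ℝ) (V : Matrix (Fin Q) (Fin K) ℝ),
        Uᵀ * U = 1 ∧ Vᵀ * V = 1 ∧ t = trace (Uᵀ * A * V)} := by
  apply csSup_eq_csSup_of_forall_exists_le
  · rintro _ ⟨W, hW, rfl⟩
    rw [← fromRows_toRows W, transpose_fromRows_mul_fromRows] at hW
    obtain ⟨U, V, hU, hV, hle⟩ := exists_isometries_two_mul_trace_le A
      (by simpa using hK.trans hQP) (by simpa using hK) hW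
    refine ⟨_, ⟨U, V, hU, hV, rfl⟩, ?_⟩
    rwa [← fromRows_toRows W, trace_transpose_fromRows_mul_fromBlocks_mul]
  · rintro _ ⟨U, V, hU, hV, rfl⟩
    obtain ⟨W, hW, htr⟩ := exists_isometry_trace_fromBlocks_eq A hU hV
    exact ⟨_, ⟨W, hW, rfl⟩, htr.ge⟩
end

section
/- For a minimal block-n TT decomposition of U with interface matrices U^{<m+1}_{(m+1)} ∈ ℝ^{R_m × I₁⋯I_m} and U^{>m}_{(1)} ∈ ℝ^{R_m × I_{m+1}⋯I_N}, the reshaped columns satisfy: span(U_{k,m}) ⊆ span((U^{<m+1}_{(m+1)})ᵀ) for m = 1,...,n−1, and span(U_{k,m}ᵀ) ⊆ span((U^{>m}_{(1)})ᵀ) for m = n,...,N, for every k = 1,...,K. Equivalently, U_{k,m} = (U^{<m+1}_{(m+1)})ᵀ U^{>m}_{k,(1)} for m < n and U_{k,m} = (U^{<m+1}_{k,(m+1)})ᵀ U^{>m}_{(1)} for m ≥ n. -/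
open Matrix

/-- Product of the first k matrices in a chain with compatible dependent sizes. -/
noncomputable def chainProd (T : ℕ → Type) [∀ n, Fintype (T n)] [DecidableEq (T 0)]
    (M : ∀ n, Matrix (T n) (T (n + 1)) ℝ) : (k : ℕ) → Matrix (T 0) (T k) ℝ
  | 0 => 1
  | k + 1 => chainProd T M k * M k

/-- The unique entry of a 1×1 matrix, obtained as the sum of all entries. -/
noncomputable def matEntry {α β : Type} [Fintype α] [Fintype β]
    (M : Matrix α β ℝ) : ℝ := ∑ a, ∑ b, M a b

/-- Entry of the k-th column of a tensor in block TT format. -/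
noncomputable def blockTTEntry (N K : ℕ) (I R : ℕ → ℕ)
    (UC : ∀ m, Fin K → Fin (I m) → Matrix (Fin (R m)) (Fin (R (m + 1))) ℝ)
    (k : Fin K) (i : ∀ p : Fin N, Fin (I p)) : ℝ :=
  matEntry (chainProd (fun m => Fin (R m))
    (fun m => if h : m < N then UC m k (i ⟨m, h⟩) else 0) N)

/-- The reshaping U_{k,m} of the k-th column u_k into an
(I₁⋯I_m) × (I_{m+1}⋯I_N) matrix. -/
noncomputable def reshapeCol (N K : ℕ) (I R : ℕ → ℕ)
    (UC : ∀ m, Fin K → Fin (I m) → Matrix (Fin (R m)) (Fin (R (m + 1))) ℝ)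
    (k : Fin K) (m : ℕ) :
    Matrix (∀ p : {q : Fin N // q.1 < m}, Fin (I p.1.1))
      (∀ p : {q : Fin N // ¬ q.1 < m}, Fin (I p.1.1)) ℝ :=
  Matrix.of fun ir ic => blockTTEntry N K I R UC k
    (fun p => if h : p.1 < m then ir ⟨p, h⟩ else ic ⟨p, h⟩)

/-- The transposed left interface matrix (U^{<m+1}_{(m+1)})ᵀ: contraction of
cores 1,…,m, rows indexed by the first m modes, columns by the rank index R_m. -/
noncomputable def leftInterface (N K : ℕ) (I R : ℕ → ℕ)
    (UC : ∀ m, Fin K → Fin (I m) → Matrix (Fin (R m)) (Fin (R (m + 1))) ℝ)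
    (k : Fin K) (m : ℕ) :
    Matrix (∀ p : {q : Fin N // q.1 < m}, Fin (I p.1.1)) (Fin (R m)) ℝ :=
  Matrix.of fun ir r => ∑ z : Fin (R 0),
    chainProd (fun p => Fin (R p))
      (fun p => if h : p < m ∧ p < N then UC p k (ir ⟨⟨p, h.2⟩, h.1⟩) else 0) m z r

/-- The right interface matrix U^{>m}_{(1)}: contraction of cores m+1,…,N, rows
indexed by the rank index R_m, columns by the last N−m modes. -/
noncomputable def rightInterface (N K : ℕ) (I R : ℕ → ℕ)
    (UC : ∀ m, Fin K → Fin (I m) → Matrix (Fin (R m)) (Fin (R (m + 1))) ℝ)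
    (k : Fin K) (m : ℕ) :
    Matrix (Fin (R m)) (∀ p : {q : Fin N // ¬ q.1 < m}, Fin (I p.1.1)) ℝ :=
  Matrix.of fun r ic => ∑ z : Fin (R (m + (N - m))),
    chainProd (fun p => Fin (R (m + p)))
      (fun p => if h : m + p < N then
          UC (m + p) k (ic ⟨⟨m + p, h⟩, Nat.not_lt.mpr (Nat.le_add_right m p)⟩) else 0) (N - m) r z

/-
The contraction of all N cores splits at any m ≤ N into the contraction of the first m cores
times that of the last N − m cores. Since `matEntry` sums all entries, the entry of this product
is a sum over the rank index R_m of row sums of the left factor times column sums of the right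
factor, i.e. an entry of `leftInterface * rightInterface`. The left factor involves only the cores
with index < m and the right one only those with index ≥ m; for m ≤ n, resp. m > n, these cores
do not depend on k.
-/

section ChainProd

variable {T : ℕ → Type} [∀ n, Fintype (T n)]

lemma chainProd_congr [DecidableEq (T 0)] {M M' : ∀ n, Matrix (T n) (T (n + 1)) ℝ} :
    ∀ {k}, (∀ p < k, M p = M' p) → chainProd T M k = chainProd T M' k
  | 0, _ => rfl
  | k + 1, h => by
      rw [chainProd, chainProd, chainProd_congr fun p hp => h p (hp.trans k.lt_succ_self),
        h k k.lt_succ_self]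

lemma chainProd_add [∀ n, DecidableEq (T n)] (M : ∀ n, Matrix (T n) (T (n + 1)) ℝ) (m : ℕ) :
    ∀ d, chainProd T M (m + d)
      = chainProd T M m * chainProd (fun p => T (m + p)) (fun p => M (m + p)) d
  | 0 => (Matrix.mul_one _).symm
  | d + 1 => by
      change chainProd T M (m + d) * M (m + d) = _ * (_ * M (m + d))
      rw [chainProd_add M m d, Matrix.mul_assoc]

end ChainProd

lemma matEntry_mul {α β γ : Type} [Fintype α] [Fintype β] [Fintype γ]
    (A : Matrix α β ℝ) (B : Matrix β γ ℝ) :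
    matEntry (A * B) = ∑ r, (∑ a, A a r) * ∑ c, B r c := by
  simp only [matEntry, Matrix.mul_apply, Finset.sum_mul_sum]
  conv_rhs => rw [Finset.sum_comm]
  exact Finset.sum_congr rfl fun _ _ => Finset.sum_comm

section BlockTT

variable {N K : ℕ} {I R : ℕ → ℕ}
  (UC : ∀ m, Fin K → Fin (I m) → Matrix (Fin (R m)) (Fin (R (m + 1))) ℝ)

lemma reshapeCol_eq_leftInterface_mul_rightInterface (k : Fin K) {m : ℕ} (hm : m ≤ N) :
    reshapeCol N K I R UC k m
      = leftInterface N K I R UC k m * rightInterface N K I R UC k m := by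
  obtain ⟨d, rfl⟩ := Nat.exists_eq_add_of_le hm
  ext ir ic
  simp only [reshapeCol, blockTTEntry, leftInterface, rightInterface, Matrix.of_apply,
    Matrix.mul_apply, chainProd_add _ m d, matEntry_mul]
  rw [Nat.add_sub_cancel_left]
  refine Finset.sum_congr rfl fun r _ => congrArg₂ (· * ·) ?_ ?_
  · refine Finset.sum_congr rfl fun z _ =>
      congrFun (congrFun (chainProd_congr (T := fun p => Fin (R p)) fun p hp => ?_) z) r
    have hpN : p < m + d := hp.trans_le (Nat.le_add_right m d)
    rw [dif_pos hpN, dif_pos (And.intro hp hpN), dif_pos hp]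
  · refine Finset.sum_congr rfl fun z _ =>
      congrFun (congrFun (chainProd_congr (T := fun p => Fin (R (m + p))) fun p hp => ?_) r) z
    have hpN : m + p < m + d := Nat.add_lt_add_left hp m
    rw [dif_pos hpN, dif_pos hpN, dif_neg (Nat.not_lt.mpr (Nat.le_add_right m p))]

lemma leftInterface_congr {k k' : Fin K} {m : ℕ} (h : ∀ p < m, UC p k = UC p k') :
    leftInterface N K I R UC k m = leftInterface N K I R UC k' m := by
  ext ir r
  simp only [leftInterface, Matrix.of_apply]
  refine Finset.sum_congr rfl fun z _ =>
    congrFun (congrFun (chainProd_congr (T := fun p => Fin (R p)) fun p hp => ?_) z) r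
  rw [h p hp]

lemma rightInterface_congr {k k' : Fin K} {m : ℕ} (h : ∀ p ≥ m, UC p k = UC p k') :
    rightInterface N K I R UC k m = rightInterface N K I R UC k' m := by
  ext r ic
  simp only [rightInterface, Matrix.of_apply]
  refine Finset.sum_congr rfl fun z _ =>
    congrFun (congrFun (chainProd_congr (T := fun p => Fin (R (m + p))) fun p _ => ?_) r) z
  rw [h (m + p) (Nat.le_add_right m p)]

end BlockTT

theorem stmt_7_general (N K n : ℕ) (hn : n < N)
    (I R : ℕ → ℕ)
    (UC : ∀ m, Fin K → Fin (I m) → Matrix (Fin (R m)) (Fin (R (m + 1))) ℝ)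
    (hind : ∀ m, m ≠ n → ∀ k k', UC m k = UC m k') :
    (∀ (k k' : Fin K) (m : ℕ), 1 ≤ m → m ≤ n →
      reshapeCol N K I R UC k m
        = leftInterface N K I R UC k' m * rightInterface N K I R UC k m)
    ∧ (∀ (k k' : Fin K) (m : ℕ), n < m → m ≤ N →
      reshapeCol N K I R UC k m
        = leftInterface N K I R UC k m * rightInterface N K I R UC k' m) := by
  refine ⟨fun k k' m _ hmn => ?_, fun k k' m hnm hmN => ?_⟩
  · rw [reshapeCol_eq_leftInterface_mul_rightInterface UC k (hmn.trans hn.le),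
      leftInterface_congr UC fun p hp => hind p (hp.trans_le hmn).ne k k']
  · rw [reshapeCol_eq_leftInterface_mul_rightInterface UC k hmN,
      rightInterface_congr UC fun p hp => hind p (hnm.trans_le hp).ne' k k']

/-- For a (minimal) block-n TT decomposition, each reshaped column factors
through the interface matrices: U_{k,m} = (U^{<m+1}_{(m+1)})ᵀ U^{>m}_{k,(1)} for
m ≤ n (the left factor not depending on k) and
U_{k,m} = (U^{<m+1}_{k,(m+1)})ᵀ U^{>m}_{(1)} for m > n (the right factor not
depending on k); hence span(U_{k,m}) ⊆ span((U^{<m+1}_{(m+1)})ᵀ) resp.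
span(U_{k,m}ᵀ) ⊆ span((U^{>m}_{(1)})ᵀ). -/
theorem stmt_7 (N K n : ℕ) (hn : n < N) (hK : 0 < K)
    (I R : ℕ → ℕ) (hR0 : R 0 = 1) (hRN : R N = 1)
    (UC : ∀ m, Fin K → Fin (I m) → Matrix (Fin (R m)) (Fin (R (m + 1))) ℝ)
    (hind : ∀ m, m ≠ n → ∀ k k', UC m k = UC m k') :
    (∀ (k k' : Fin K) (m : ℕ), 1 ≤ m → m ≤ n →
      reshapeCol N K I R UC k m
        = leftInterface N K I R UC k' m * rightInterface N K I R UC k m)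
    ∧ (∀ (k k' : Fin K) (m : ℕ), n < m → m ≤ N →
      reshapeCol N K I R UC k m
        = leftInterface N K I R UC k m * rightInterface N K I R UC k' m) :=
  stmt_7_general N K n hn I R UC hind
end

section
/- Let the shift matrix F ∈ ℝ^{2^N×2^N} be defined by F_{ij} = 1 if j = i+1 and 0 otherwise. With the 2×2 matrices I = [[1,0],[0,1]], J = [[0,1],[0,0]], K = [[0,0],[1,0]], and the block matrices L̃^{(N)} = [I J], L̃^{(n)} = [[I,J],[0,K]] for 2 ≤ n ≤ N−1, L̃^{(1)} = [J;K] (with blocks L^{(n)}_{q_n,q_{n-1}}), we have F = Σ_{q₁,...,q_{N-1} ∈ {1,2}} L^{(N)}_{1,q_{N-1}} ⊗ L^{(N-1)}_{q_{N-1},q_{N-2}} ⊗ ⋯ ⊗ L^{(1)}_{q₁,1}. -/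
/-!
Read the rank index `q m` as the carry entering bit `m` when `1` is added to `i` bit by bit,
starting from the least significant one. The blocks are exactly the full-adder relation
`shiftBlock c' c x y = [y + 2 c' = x + c]` between the incoming carry `c`, the outgoing carry
`c'`, the input bit `x` and the output bit `y`. A sequence of carries with `q 0 = 1` and
`q N = 0` consistent with all bits exists iff `val j = val i + 1`, and it is then unique,
so the sum over `q` is the indicator of the superdiagonal.
-/

open Matrix

/-- The 2×2 blocks I, J, K, 0 of the block matrices L̃⁽ⁿ⁾: `shiftBlock r c` is
the (r,c) block (0-based) of the middle block matrix [[I,J],[0,K]]; the top core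
[I J] corresponds to row 0 and the bottom core [J;K] to column 1. -/
noncomputable def shiftBlock : Fin 2 → Fin 2 → Matrix (Fin 2) (Fin 2) ℝ :=
  fun r c =>
    if r = 0 then (if c = 0 then 1 else !![0, 1; 0, 0])
    else (if c = 1 then !![0, 0; 1, 0] else 0)

section PathSum

variable {R ρ : Type*} [CommSemiring R] [Fintype ρ] [DecidableEq ρ]

/-- The `(b, a)` entry of the matrix product `G (N - 1) * ⋯ * G 0`, as a sum over index paths. -/
def pathSum {N : ℕ} (G : Fin N → ρ → ρ → R) (a b : ρ) : R :=
  ∑ q : Fin (N + 1) → ρ,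
    (if q 0 = a ∧ q (Fin.last N) = b then 1 else 0) * ∏ m, G m (q m.succ) (q m.castSucc)

theorem pathSum_zero (G : Fin 0 → ρ → ρ → R) (a b : ρ) :
    pathSum G a b = if a = b then 1 else 0 := by
  rw [pathSum, ← (Equiv.funUnique (Fin 1) ρ).symm.sum_comp]
  simp [Equiv.funUnique, Fin.last, ite_and, eq_comm]

theorem pathSum_succ {N : ℕ} (G : Fin (N + 1) → ρ → ρ → R) (a b : ρ) :
    pathSum G a b = ∑ a', G 0 a' a * pathSum (fun m => G m.succ) a' b := by
  simp only [pathSum, Finset.mul_sum]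
  rw [← Equiv.sum_comp (Fin.consEquiv fun _ : Fin (N + 2) => ρ), Fintype.sum_prod_type,
    Finset.sum_comm, Finset.sum_comm (s := Finset.univ (α := ρ))]
  refine Finset.sum_congr rfl fun q _ => ?_
  simp only [Fin.consEquiv_apply, Fin.prod_univ_succ, Fin.cons_zero, ← Fin.succ_last,
    ← Fin.succ_castSucc, Fin.cons_succ, Fin.castSucc_zero, ite_and, ite_mul, mul_ite, one_mul,
    zero_mul, mul_zero, Finset.sum_ite_eq', Finset.sum_ite_eq, Finset.mem_univ, if_true]

end PathSum

theorem Fin.sum_mul_pow_succ {M : Type*} [CommSemiring M] {N : ℕ} (f : Fin (N + 1) → M) (b : M) :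
    ∑ m : Fin (N + 1), f m * b ^ (m : ℕ) = f 0 + b * ∑ m : Fin N, f m.succ * b ^ (m : ℕ) := by
  simp only [Fin.sum_univ_succ, Fin.val_zero, pow_zero, mul_one, Fin.val_succ, pow_succ,
    Finset.mul_sum]
  congr 1
  exact Finset.sum_congr rfl fun m _ => by ring

theorem shiftBlock_apply (c' c x y : Fin 2) :
    shiftBlock c' c x y = if (y : ℕ) + 2 * c' = x + c then 1 else 0 := by
  fin_cases c' <;> fin_cases c <;> fin_cases x <;> fin_cases y <;> simp [shiftBlock]

theorem ite_add_carry_eq_sum (c x y : Fin 2) (s t : ℕ) :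
    (if (y : ℕ) + 2 * t = x + 2 * s + c then (1 : ℝ) else 0) =
      ∑ c' : Fin 2, (if (y : ℕ) + 2 * c' = x + c then 1 else 0) * (if t = s + c' then 1 else 0) := by
  simp only [Fin.sum_univ_two]
  have := c.isLt; have := x.isLt; have := y.isLt
  simp only [Fin.val_zero, Fin.val_one, mul_zero, add_zero, mul_one]
  split_ifs <;> first | omega | norm_num

theorem ite_binary_add_eq_pathSum_shiftBlock (N : ℕ) (i j : Fin N → Fin 2) (c : Fin 2) :
    (if (∑ m : Fin N, (j m).val * 2 ^ (m : ℕ))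
        = (∑ m : Fin N, (i m).val * 2 ^ (m : ℕ)) + c then (1 : ℝ) else 0)
      = pathSum (fun m r s => shiftBlock r s (i m) (j m)) c 0 := by
  induction N generalizing c with
  | zero => fin_cases c <;> simp [pathSum_zero]
  | succ N ih =>
    rw [Fin.sum_mul_pow_succ, Fin.sum_mul_pow_succ, ite_add_carry_eq_sum, pathSum_succ]
    simp only [shiftBlock_apply, ih (fun m => i m.succ) (fun m => j m.succ)]

/-- Entrywise, with the little-endian multi-index convention
(i₁,...,i_N) = i₁ + 2 i₂ + ⋯ + 2^{N-1} i_N; the boundary rank indices are fixed by the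
indicator on q 0 and q N. -/
theorem stmt_17 (N : ℕ) (i j : Fin N → Fin 2) :
    (if (∑ m : Fin N, (j m).val * 2 ^ (m : ℕ))
        = (∑ m : Fin N, (i m).val * 2 ^ (m : ℕ)) + 1 then (1 : ℝ) else 0)
      = ∑ q : Fin (N + 1) → Fin 2,
          (if q 0 = 1 ∧ q (Fin.last N) = 0 then (1 : ℝ) else 0) *
            ∏ m : Fin N, shiftBlock (q m.succ) (q m.castSucc) (i m) (j m) :=
  ite_binary_add_eq_pathSum_shiftBlock N i j 1
end
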